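/- arXiv:0803.4113 — 2 statements merged into one kernel-verified Lean document; each statement's English description precedes it below -/
import Mathlib

section
/- Let r ≤ 8. In the free abelian group Cl = Z^{1+r} with basis L, E_1, ..., E_r, equipped with the symmetric bilinear form determined by L·L = 1, E_i·E_i = -1, L·E_i = 0, and E_i·E_j = 0 for i ≠ j, let K = -3L + E_1 + ... + E_r. Then the restriction of the bilinear form to the orthogonal complement K^⊥ = {v : v·K = 0} is negative definite. -/
open Finset

/-- `Cl r = ℤ^{1+r}` represented as pairs `(d, e)` standing for `d·L + ∑ i, e i · E i`. -/
abbrev Cl (r : ℕ) := ℤ × (Fin r → ℤ)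

/-- The blow-up intersection form: `L·L = 1`, `E i · E i = -1`, distinct basis vectors
orthogonal. -/
def form {r : ℕ} (u v : Cl r) : ℤ := u.1 * v.1 - ∑ i, u.2 i * v.2 i

/-- The canonical class `K = -3L + E_1 + ⋯ + E_r`. -/
def Kcl (r : ℕ) : Cl r := (-3, fun _ => 1)

/-!
Write `v = d L + ∑ eᵢ Eᵢ`. Orthogonality to `K` says `∑ eᵢ = -3d`, so Cauchy–Schwarz gives
`9 d² ≤ r ∑ eᵢ² ≤ 8 ∑ eᵢ²`. Hence `v·v = d² - ∑ eᵢ² < 0` unless `∑ eᵢ² = 0`, which forces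
`e = 0` and then `d = 0`.
-/

open Matrix

theorem sq_sum_le_card_mul_dotProduct_self {ι R : Type*} [Fintype ι] [CommRing R] [LinearOrder R]
    [IsStrictOrderedRing R] (e : ι → R) : (∑ i, e i) ^ 2 ≤ Fintype.card ι * (e ⬝ᵥ e) := by
  simpa [dotProduct, sq] using sq_sum_le_card_mul_sum_sq (s := univ) (f := e)

theorem form_self {r : ℕ} (v : Cl r) : form v v = v.1 * v.1 - v.2 ⬝ᵥ v.2 := rfl

theorem form_Kcl {r : ℕ} (v : Cl r) : form v (Kcl r) = -3 * v.1 - ∑ i, v.2 i := by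
  simp only [form, Kcl, mul_one]
  ring

theorem nine_mul_fst_sq_le_of_form_Kcl_eq_zero {r : ℕ} {v : Cl r} (hK : form v (Kcl r) = 0) :
    9 * (v.1 * v.1) ≤ r * (v.2 ⬝ᵥ v.2) := by
  have hsum : ∑ i, v.2 i = -3 * v.1 := by linarith [form_Kcl v]
  calc 9 * (v.1 * v.1) = (∑ i, v.2 i) ^ 2 := by rw [hsum]; ring
    _ ≤ r * (v.2 ⬝ᵥ v.2) := by simpa using sq_sum_le_card_mul_dotProduct_self v.2

/-- For `r ≤ 8`, the restriction of the intersection form to `K^⊥` is negative definite. -/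
theorem negdef_Kperp (r : ℕ) (hr : r ≤ 8) (v : Cl r)
    (hK : form v (Kcl r) = 0) (hv : v ≠ 0) : form v v < 0 := by
  obtain ⟨d, e⟩ := v
  have hS : 0 ≤ e ⬝ᵥ e := Fintype.sum_nonneg fun i => mul_self_nonneg (e i)
  have h9 : 9 * (d * d) ≤ 8 * (e ⬝ᵥ e) :=
    (nine_mul_fst_sq_le_of_form_Kcl_eq_zero hK).trans (by gcongr; exact_mod_cast hr)
  have hS_pos : 0 < e ⬝ᵥ e := by
    refine hS.lt_of_ne fun hS0 => hv ?_
    have he : e = 0 := dotProduct_self_eq_zero.mp hS0.symm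
    have hd : d = 0 := by nlinarith
    rw [hd, he]
    rfl
  rw [form_self]
  linarith
end

section
/- Let r ≤ 8 and Cl = Z^{1+r} with the standard blow-up form and K = -3L + E_1 + ... + E_r. Let S ⊆ K^⊥ be a set such that every element D of S satisfies D·L > 0, and such that S is pairwise nonnegative (C·D ≥ 0 for distinct C, D ∈ S). If v lies in the subgroup of K^⊥ generated by S, v² = -2, and v·L ≥ 0, then v is a nonnegative integer linear combination of elements of S. -/
/-!
Write `v = P - N`, where `P` and `N` collect the positive and the negative coefficients of an
integer combination of elements of `S`, so that `P·N ≥ 0` by pairwise nonnegativity. Both lie in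
`K^⊥`, which is negative definite and even for `r ≤ 8`, so every nonzero one of them has square
`≤ -2`. From `-2 = v² = P² + N² - 2 P·N`, at most one of `P`, `N` is nonzero; and `N ≠ 0` is
excluded since then `v·L = -N·L < 0`. Hence `v = P`.
-/

open Finset

/-- The class of a line `L`. -/
def Lcl (r : ℕ) : Cl r := (1, fun _ => 0)

section IntersectionForm

variable {r : ℕ}

def formBilin (r : ℕ) : LinearMap.BilinForm ℤ (Cl r) :=
  (LinearMap.mul ℤ ℤ).compl₁₂ (LinearMap.fst ℤ ℤ _) (LinearMap.fst ℤ ℤ _) -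
    (dotProductBilin ℤ ℤ).compl₁₂ (LinearMap.snd ℤ ℤ _) (LinearMap.snd ℤ ℤ _)

theorem formBilin_apply (u v : Cl r) : formBilin r u v = form u v := rfl

theorem form_comm (u v : Cl r) : form u v = form v u := by
  simp only [form, mul_comm]

theorem form_zero_left (w : Cl r) : form 0 w = 0 := by
  simp only [← formBilin_apply, map_zero, LinearMap.zero_apply]

theorem form_zero_right (w : Cl r) : form w 0 = 0 := by
  simp only [← formBilin_apply, map_zero]

theorem form_add_left (u v w : Cl r) : form (u + v) w = form u w + form v w := by
  simp only [← formBilin_apply, map_add, LinearMap.add_apply]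

theorem form_add_right (u v w : Cl r) : form w (u + v) = form w u + form w v := by
  simp only [← formBilin_apply, map_add]

theorem form_neg_left (u w : Cl r) : form (-u) w = -form u w := by
  simp only [← formBilin_apply, map_neg, LinearMap.neg_apply]

theorem form_sub_self (u v : Cl r) :
    form (u - v) (u - v) = form u u + form v v - 2 * form u v := by
  simp only [← formBilin_apply, map_sub, LinearMap.sub_apply]
  rw [formBilin_apply v u, form_comm v u, formBilin_apply u v]
  ring

theorem form_self_s3 (w : Cl r) : form w w = w.1 ^ 2 - ∑ i, w.2 i ^ 2 := by
  simp only [form, sq]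

theorem sum_snd_of_form_Kcl_eq_zero {w : Cl r} (hK : form w (Kcl r) = 0) :
    ∑ i, w.2 i = -3 * w.1 := by
  simp only [form, Kcl, mul_one] at hK
  linarith

/-- Cauchy–Schwarz gives `9 d² = (∑ eᵢ)² ≤ r ∑ eᵢ² ≤ 8 ∑ eᵢ²`, so `d² - ∑ eᵢ² < 0` unless `w = 0`. -/
theorem form_self_neg (hr : r ≤ 8) {w : Cl r} (hK : form w (Kcl r) = 0) (hw : w ≠ 0) :
    form w w < 0 := by
  have hCS : (∑ i, w.2 i) ^ 2 ≤ r * ∑ i, w.2 i ^ 2 := by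
    simpa using sq_sum_le_card_mul_sum_sq (s := univ) (f := w.2)
  rw [sum_snd_of_form_Kcl_eq_zero hK] at hCS
  have hr' : (r : ℤ) ≤ 8 := by exact_mod_cast hr
  have hsq : 0 ≤ ∑ i, w.2 i ^ 2 := sum_nonneg fun i _ => sq_nonneg _
  rw [form_self_s3]
  by_contra! h
  have hsq0 : ∑ i, w.2 i ^ 2 = 0 := by nlinarith
  have hd : w.1 = 0 := by nlinarith
  have he : ∀ i, w.2 i = 0 := fun i => pow_eq_zero_iff two_ne_zero |>.mp <|
    (sum_eq_zero_iff_of_nonneg fun i _ => sq_nonneg (w.2 i)).mp hsq0 i (mem_univ i)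
  exact hw (Prod.ext hd (funext he))

/-- Modulo 2, `x² ≡ x`, so `w·w ≡ d - ∑ eᵢ = 4d`. -/
theorem two_dvd_form_self {w : Cl r} (hK : form w (Kcl r) = 0) : 2 ∣ form w w := by
  apply (ZMod.intCast_zmod_eq_zero_iff_dvd _ 2).1
  have hsum := congrArg (Int.cast : ℤ → ZMod 2) (sum_snd_of_form_Kcl_eq_zero hK)
  push_cast [form_self_s3] at hsum ⊢
  simp only [ZMod.pow_card, hsum]
  ring_nf
  reduce_mod_char

theorem form_self_le_neg_two (hr : r ≤ 8) {w : Cl r} (hK : form w (Kcl r) = 0) (hw : w ≠ 0) :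
    form w w ≤ -2 := by
  have hneg := form_self_neg hr hK hw
  obtain ⟨k, hk⟩ := two_dvd_form_self hK
  omega

end IntersectionForm

theorem AddSubmonoid.exists_fin_sum_of_mem_closure {M : Type*} [AddCommGroup M] {s : Set M}
    {x : M} (hx : x ∈ AddSubmonoid.closure s) :
    ∃ (n : ℕ) (c : Fin n → M) (m : Fin n → ℕ), (∀ i, c i ∈ s) ∧ x = ∑ i, (m i : ℤ) • c i := by
  obtain ⟨l, hl, rfl⟩ := AddSubmonoid.exists_list_of_mem_closure hx
  refine ⟨l.length, l.get, 1, fun i => hl _ (l.get_mem i), ?_⟩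
  simp only [Pi.one_apply, Nat.cast_one, one_smul, ← List.sum_ofFn, List.ofFn_get]

theorem AddSubgroup.exists_sub_of_mem_closure {M : Type*} [AddCommGroup M] {S : Set M} {v : M}
    (hv : v ∈ AddSubgroup.closure S) :
    ∃ A ⊆ S, ∃ B ⊆ S, Disjoint A B ∧
      ∃ P ∈ AddSubmonoid.closure A, ∃ N ∈ AddSubmonoid.closure B, v = P - N := by
  rw [← Submodule.span_int_eq_addSubgroupClosure, Submodule.mem_toAddSubgroup,
    Submodule.mem_span_set] at hv
  obtain ⟨c, hcS, rfl⟩ := hv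
  refine ⟨{D ∈ S | 0 < c D}, Set.sep_subset _ _, {D ∈ S | c D < 0}, Set.sep_subset _ _,
    Set.disjoint_left.2 fun D h₁ h₂ => lt_asymm h₁.2 h₂.2,
    c.sum fun D k => k.toNat • D, sum_mem fun D hD => ?_,
    c.sum fun D k => (-k).toNat • D, sum_mem fun D hD => ?_, ?_⟩
  · by_cases h : 0 < c D
    · exact nsmul_mem (AddSubmonoid.subset_closure (Set.mem_sep (hcS hD) h)) _
    · simp [Int.toNat_eq_zero.2 (not_lt.1 h)]
  · by_cases h : c D < 0
    · exact nsmul_mem (AddSubmonoid.subset_closure (Set.mem_sep (hcS hD) h)) _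
    · simp [Int.toNat_eq_zero.2 (neg_nonpos.2 (not_lt.1 h))]
  · rw [← Finsupp.sum_sub]
    refine Finsupp.sum_congr fun D _ => ?_
    rw [← natCast_zsmul, ← natCast_zsmul, ← sub_smul, Int.toNat_sub_toNat_neg]

section Closure

variable {r : ℕ} {A B S : Set (Cl r)}

theorem form_eq_zero_of_mem_closure {w : Cl r} (h : ∀ D ∈ S, form D w = 0) {x : Cl r}
    (hx : x ∈ AddSubmonoid.closure S) : form x w = 0 := by
  induction hx using AddSubmonoid.closure_induction with
  | mem x hx => exact h x hx
  | zero => exact form_zero_left w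
  | add x y _ _ hx hy => rw [form_add_left, hx, hy, add_zero]

theorem eq_zero_or_form_pos_of_mem_closure {w : Cl r} (h : ∀ D ∈ S, 0 < form D w) {x : Cl r}
    (hx : x ∈ AddSubmonoid.closure S) : x = 0 ∨ 0 < form x w := by
  induction hx using AddSubmonoid.closure_induction with
  | mem x hx => exact .inr (h x hx)
  | zero => exact .inl rfl
  | add x y _ _ hx hy =>
    rw [form_add_left]
    rcases hx with rfl | hx
    · rw [zero_add, form_zero_left, zero_add]; exact hy
    · rcases hy with rfl | hy
      · rw [add_zero, form_zero_left, add_zero]; exact .inr hx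
      · exact .inr (add_pos hx hy)

theorem form_nonneg_of_mem_closure (h : ∀ a ∈ A, ∀ b ∈ B, 0 ≤ form a b) {x y : Cl r}
    (hx : x ∈ AddSubmonoid.closure A) (hy : y ∈ AddSubmonoid.closure B) : 0 ≤ form x y := by
  induction hx using AddSubmonoid.closure_induction with
  | mem a ha =>
    induction hy using AddSubmonoid.closure_induction with
    | mem b hb => exact h a ha b hb
    | zero => exact (form_zero_right a).ge
    | add y z _ _ hy hz => rw [form_add_right]; exact add_nonneg hy hz
  | zero => exact (form_zero_left y).ge
  | add x z _ _ hx hz => rw [form_add_left]; exact add_nonneg hx hz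

end Closure

/-- For `r ≤ 8`: if `S ⊆ K^⊥` consists of classes meeting `L` positively and is pairwise
nonnegative, then any `v` in the subgroup generated by `S` with `v² = -2` and `v·L ≥ 0`
is a nonnegative integer linear combination of elements of `S`. -/
theorem neg_two_class_is_nonneg_combination (r : ℕ) (hr : r ≤ 8) (S : Set (Cl r))
    (hSK : ∀ D ∈ S, form D (Kcl r) = 0)
    (hSL : ∀ D ∈ S, 0 < form D (Lcl r))
    (hSpair : ∀ C ∈ S, ∀ D ∈ S, C ≠ D → 0 ≤ form C D)
    (v : Cl r) (hv : v ∈ AddSubgroup.closure S)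
    (hv2 : form v v = -2) (hvL : 0 ≤ form v (Lcl r)) :
    ∃ (n : ℕ) (c : Fin n → Cl r) (m : Fin n → ℕ),
      (∀ i, c i ∈ S) ∧ v = ∑ i, (m i : ℤ) • c i := by
  obtain ⟨A, hAS, B, hBS, hAB, P, hP, N, hN, rfl⟩ := AddSubgroup.exists_sub_of_mem_closure hv
  have hPN : 0 ≤ form P N := form_nonneg_of_mem_closure
    (fun a ha b hb => hSpair a (hAS ha) b (hBS hb) (hAB.ne_of_mem ha hb)) hP hN
  replace hP := AddSubmonoid.closure_mono hAS hP
  replace hN := AddSubmonoid.closure_mono hBS hN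
  rcases eq_zero_or_form_pos_of_mem_closure hSL hN with rfl | hNL
  · rw [sub_zero]
    exact AddSubmonoid.exists_fin_sum_of_mem_closure hP
  have hN0 : N ≠ 0 := by
    rintro rfl
    exact hNL.ne (form_zero_left _).symm
  obtain rfl : P = 0 := by
    by_contra hP0
    have hP2 := form_self_le_neg_two hr (form_eq_zero_of_mem_closure hSK hP) hP0
    have hN2 := form_self_le_neg_two hr (form_eq_zero_of_mem_closure hSK hN) hN0
    rw [form_sub_self] at hv2
    linarith
  rw [zero_sub, form_neg_left] at hvL
  linarith
end
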